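/- arXiv:2506.09810 — 2 statements merged into one kernel-verified Lean document; each statement's English description precedes it below -/
import Mathlib

section
/- The SupCon loss with the adjustment term bounds mutual information: under the batch sampling model described in the context, I(X;C) ≥ 1 + log N − I_NCE^{sup} − R^{sup}. (Corollary 1.) -/
open MeasureTheory ProbabilityTheory Filter
open scoped Classical ENNReal Topology

/-- The Kullback–Leibler divergence `KL(P‖Q) = ∫ log (dP/dQ) dP`, with value `+∞`
when `P` is not absolutely continuous with respect to `Q` (or the integral is undefined). -/
noncomputable def klDivergence {Ω : Type*} [MeasurableSpace Ω] (P Q : Measure Ω) : EReal :=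
  if P ≪ Q ∧ Integrable (fun ω => Real.log ((P.rnDeriv Q ω).toReal)) P
  then ((∫ ω, Real.log ((P.rnDeriv Q ω).toReal) ∂P : ℝ) : EReal)
  else ⊤

/-- The mutual information `I(X;C) := KL(law(X,C) ‖ law(X) ⊗ law(C))`. -/
noncomputable def mutualInfo {Ω 𝓧 𝒞 : Type*} [MeasurableSpace Ω] [MeasurableSpace 𝓧]
    [MeasurableSpace 𝒞] (μ : Measure Ω) (X : Ω → 𝓧) (C : Ω → 𝒞) : EReal :=
  klDivergence (μ.map (fun ω => (X ω, C ω))) ((μ.map X).prod (μ.map C))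

/-- The conditional law of `X` given `C = c`. -/
noncomputable def condLaw {Ω 𝓧 𝒞 : Type*} [MeasurableSpace Ω] [MeasurableSpace 𝓧]
    [MeasurableSpace 𝒞] (μ : Measure Ω) (X : Ω → 𝓧) (C : Ω → 𝒞) (c : 𝒞) : Measure 𝓧 :=
  (μ[|C ⁻¹' {c}]).map X


/-- The law of a batch `((C₁,…,C_N), (X₁,…,X_N))`: `C₁,…,C_N` are i.i.d. copies of `C`, and
each `X_j` is drawn from the conditional law of `X` given `C = C_j`, conditionally
independently across `j`. -/
noncomputable def batchLaw {Ω 𝓧 𝒞 : Type*} [MeasurableSpace Ω] [MeasurableSpace 𝓧]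
    [MeasurableSpace 𝒞] (μ : Measure Ω) (X : Ω → 𝓧) (C : Ω → 𝒞) (N : ℕ) :
    Measure ((Fin N → 𝒞) × (Fin N → 𝓧)) :=
  (Measure.pi fun _ : Fin N => μ.map C).bind
    (fun cs => (Measure.pi fun j : Fin N => condLaw μ X C (cs j)).map (fun xs => (cs, xs)))

/-- The law of `(batch, X)` where, given the classes of the batch, `X` is drawn from the
conditional law of `X` given `C = C_i`, conditionally independently of the batch inputs. -/
noncomputable def PSup {Ω 𝓧 𝒞 : Type*} [MeasurableSpace Ω] [MeasurableSpace 𝓧]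
    [MeasurableSpace 𝒞] (μ : Measure Ω) (X : Ω → 𝓧) (C : Ω → 𝒞) (N : ℕ) (i : Fin N) :
    Measure (((Fin N → 𝒞) × (Fin N → 𝓧)) × 𝓧) :=
  (batchLaw μ X C N).bind (fun b => (condLaw μ X C (b.1 i)).map (fun x => (b, x)))

/-- The law of `(batch, X')` where `X'` is an independent draw from the marginal law of `X`,
independent of the batch. -/
noncomputable def QSup {Ω 𝓧 𝒞 : Type*} [MeasurableSpace Ω] [MeasurableSpace 𝓧]
    [MeasurableSpace 𝒞] (μ : Measure Ω) (X : Ω → 𝓧) (C : Ω → 𝒞) (N : ℕ) :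
    Measure (((Fin N → 𝒞) × (Fin N → 𝓧)) × 𝓧) :=
  (batchLaw μ X C N).prod (μ.map X)

/-- The class centroid `m_k := (1/|𝒫(k)|) Σ_{p ∈ 𝒫(k)} f(X_p)` where
`𝒫(k) = {p : C_p = C_k}`. -/
noncomputable def centroid {𝓧 𝒞 : Type*} [DecidableEq 𝒞] {dz N : ℕ}
    (f : 𝓧 → EuclideanSpace ℝ (Fin dz)) (cs : Fin N → 𝒞) (xs : Fin N → 𝓧) (k : Fin N) :
    EuclideanSpace ℝ (Fin dz) :=
  (((Finset.univ.filter (fun p => cs p = cs k)).card : ℝ))⁻¹ •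
    ∑ p ∈ Finset.univ.filter (fun p => cs p = cs k), f (xs p)

/-! The joint law of `(X, C)` has density `ρ(x, c) = p(x | c) / p(x)` with respect to
`law X ⊗ law C`. For each anchor `i`, the law of `(batch, X)` has density `ρ(X, C_i)` with respect
to the law of `(batch, X')`, and pushing it forward along `(batch, x) ↦ (x, C_i)` recovers the joint
law, so in both cases the expected log-density is `I(X; C)`. The Nguyen–Wainwright–Jordan inequality
`E_P[log g] + 1 - E_Q[g] ≤ E_P[log dP/dQ]`, a consequence of `log t ≤ t - 1`, applied to the score
`g = N e^{ψ(f X, m_i)} / Σ_j e^{ψ(f X, f X_j)}` and averaged over `i`, is the claimed bound. -/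

theorem withDensity_map_eq_map_withDensity {α β : Type*} [MeasurableSpace α] [MeasurableSpace β]
    {μ : Measure α} {f : α → β} (hf : Measurable f) {g : β → ℝ≥0∞} (hg : Measurable g) :
    (μ.map f).withDensity g = (μ.withDensity (g ∘ f)).map f := by
  ext s hs
  rw [withDensity_apply _ hs, setLIntegral_map hs hg hf, Measure.map_apply hf hs,
    withDensity_apply _ (hf hs), Function.comp_def]

theorem MeasureTheory.Measure.map_bind {α β γ : Type*} [MeasurableSpace α] [MeasurableSpace β]
    [MeasurableSpace γ] (m : Measure α) {κ : α → Measure β} (hκ : Measurable κ) {f : β → γ}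
    (hf : Measurable f) : (m.bind κ).map f = m.bind fun a => (κ a).map f := by
  rw [Measure.bind, Measure.bind, ← Measure.join_map_map hf,
    Measure.map_map (Measure.measurable_map f hf) hκ]
  rfl

theorem measurable_map_prodMk_comp {β γ 𝒞 : Type*} [MeasurableSpace β] [MeasurableSpace γ]
    [MeasurableSpace 𝒞] [Countable 𝒞] [MeasurableSingletonClass 𝒞] {κ : 𝒞 → Measure γ}
    [∀ c, SFinite (κ c)] {g : β → 𝒞} (hg : Measurable g) :
    Measurable fun b => (κ (g b)).map (Prod.mk b) := by
  refine Measure.measurable_of_measurable_coe _ fun s hs => ?_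
  simp_rw [Measure.map_apply measurable_prodMk_left hs]
  have : Measurable fun q : β × 𝒞 => κ q.2 (Prod.mk q.1 ⁻¹' s) :=
    measurable_from_prod_countable_left fun c => measurable_measure_prodMk_left (ν := κ c) hs
  exact this.comp (measurable_id.prodMk hg)

/-- The Nguyen–Wainwright–Jordan variational lower bound on `∫ log (dP/dQ) dP`. -/
theorem integral_log_add_one_sub_integral_le {α : Type*} [MeasurableSpace α] {P Q : Measure α}
    [IsProbabilityMeasure P] {w : α → ℝ≥0∞} (hw : Measurable w) (hP : Q.withDensity w = P)
    {g : α → ℝ} (hgpos : ∀ a, 0 < g a)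
    (hgP : Integrable (fun a => Real.log (g a)) P) (hgQ : Integrable g Q)
    (hwP : Integrable (fun a => Real.log (w a).toReal) P) :
    ∫ a, Real.log (g a) ∂P + 1 - ∫ a, g a ∂Q ≤ ∫ a, Real.log (w a).toReal ∂P := by
  set h : α → ℝ := fun a => Real.log (g a) - Real.log (w a).toReal + 1
  have hh : Integrable h P := (hgP.sub hwP).add (integrable_const 1)
  have hw_lt_top : ∀ᵐ a ∂Q, w a < ∞ := by
    refine ae_lt_top hw ?_
    rw [← setLIntegral_univ, ← withDensity_apply _ .univ, hP]
    exact measure_ne_top P _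
  -- `log t ≤ t - 1` at `t = g / w` gives `w * h ≤ g` wherever `0 < w < ∞`.
  have hwh_le : ∀ᵐ a ∂Q, (w a).toReal • max (h a) 0 ≤ g a := by
    filter_upwards [hw_lt_top] with a ha
    rcases eq_or_ne (w a) 0 with h0 | h0
    · simpa [h0] using (hgpos a).le
    have hwpos : 0 < (w a).toReal := ENNReal.toReal_pos h0 ha.ne
    have hlog := Real.log_le_sub_one_of_pos (div_pos (hgpos a) hwpos)
    rw [Real.log_div (hgpos a).ne' hwpos.ne'] at hlog
    rw [smul_eq_mul, ← le_div_iff₀' hwpos]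
    exact max_le (by simp only [h]; linarith) (div_pos (hgpos a) hwpos).le
  have key : ∫ a, h a ∂P ≤ ∫ a, g a ∂Q :=
    calc ∫ a, h a ∂P ≤ ∫ a, max (h a) 0 ∂P :=
          integral_mono hh hh.pos_part fun a => le_max_left _ _
      _ = ∫ a, (w a).toReal • max (h a) 0 ∂Q := by
          rw [← hP, integral_withDensity_eq_integral_toReal_smul hw hw_lt_top]
      _ ≤ ∫ a, g a ∂Q :=
          integral_mono_of_nonneg (ae_of_all _ fun a => by positivity) hgQ hwh_le
  have hint : ∫ a, h a ∂P = ∫ a, Real.log (g a) ∂P - ∫ a, Real.log (w a).toReal ∂P + 1 := by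
    rw [integral_add (hgP.sub hwP : Integrable (fun a => _ - _) P) (integrable_const 1),
      integral_sub hgP hwP]
    simp
  linarith

section CondDensity

variable {Ω 𝓧 𝒞 : Type*} [MeasurableSpace Ω] [MeasurableSpace 𝓧] [MeasurableSpace 𝒞]
  (μ : Measure Ω) (X : Ω → 𝓧) (C : Ω → 𝒞)

/-- The likelihood ratio `p(x | c) / p(x)`. -/
noncomputable def condDensity (z : 𝓧 × 𝒞) : ℝ≥0∞ :=
  (condLaw μ X C z.2).rnDeriv (μ.map X) z.1

theorem measurable_condDensity [Countable 𝒞] [MeasurableSingletonClass 𝒞] :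
    Measurable (condDensity μ X C) :=
  measurable_from_prod_countable_left fun c => Measure.measurable_rnDeriv (condLaw μ X C c) _

variable {X C}

instance [IsFiniteMeasure μ] (c : 𝒞) : IsFiniteMeasure (condLaw μ X C c) := by
  unfold condLaw; infer_instance

theorem condLaw_absolutelyContinuous (hX : Measurable X) (c : 𝒞) : condLaw μ X C c ≪ μ.map X :=
  cond_absolutelyContinuous.map hX

theorem isProbabilityMeasure_condLaw [IsFiniteMeasure μ] (hX : Measurable X) {c : 𝒞}
    (hc : μ (C ⁻¹' {c}) ≠ 0) : IsProbabilityMeasure (condLaw μ X C c) :=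
  haveI := cond_isProbabilityMeasure hc
  Measure.isProbabilityMeasure_map hX.aemeasurable

variable [Fintype 𝒞] [DiscreteMeasurableSpace 𝒞]

theorem map_prodMk_eq_sum [IsFiniteMeasure μ] (hX : Measurable X) (hC : Measurable C) :
    μ.map (fun ω => (X ω, C ω)) =
      ∑ c, μ (C ⁻¹' {c}) • (condLaw μ X C c).map (fun x => (x, c)) := by
  conv_lhs => rw [← sum_meas_smul_cond_fiber hC μ]
  rw [Measure.map_finset_sum (hX.prodMk hC).aemeasurable]
  refine Finset.sum_congr rfl fun c _ => ?_
  rw [Measure.map_smul, condLaw, Measure.map_map (by fun_prop) hX]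
  congr 1
  refine Measure.map_congr ?_
  filter_upwards [ae_cond_mem (hC (measurableSet_singleton c))] with ω hω
  exact Prod.ext rfl hω

theorem withDensity_condDensity [IsFiniteMeasure μ] (hX : Measurable X) (hC : Measurable C) :
    ((μ.map X).prod (μ.map C)).withDensity (condDensity μ X C) = μ.map (fun ω => (X ω, C ω)) := by
  rw [← Measure.sum_smul_dirac (μ.map C), Measure.prod_sum_right, withDensity_sum,
    Measure.sum_fintype, map_prodMk_eq_sum μ hX hC]
  refine Finset.sum_congr rfl fun c _ => ?_
  have hc : (μ.map X).withDensity (condDensity μ X C ∘ fun x => (x, c)) = condLaw μ X C c :=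
    Measure.withDensity_rnDeriv_eq (condLaw μ X C c) (μ.map X)
      (condLaw_absolutelyContinuous μ hX c)
  rw [Measure.prod_smul_right, withDensity_smul_measure, Measure.prod_dirac,
    withDensity_map_eq_map_withDensity (by fun_prop) (measurable_condDensity μ X C), hc,
    Measure.map_apply hC (measurableSet_singleton c)]

end CondDensity

section MutualInfo

variable {Ω 𝓧 𝒞 : Type*} [MeasurableSpace Ω] [MeasurableSpace 𝓧] [MeasurableSpace 𝒞]
  [Fintype 𝒞] [DiscreteMeasurableSpace 𝒞] (μ : Measure Ω) [IsFiniteMeasure μ]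
  {X : Ω → 𝓧} {C : Ω → 𝒞}

theorem rnDeriv_map_prodMk_ae_eq_condDensity (hX : Measurable X) (hC : Measurable C) :
    (μ.map fun ω => (X ω, C ω)).rnDeriv ((μ.map X).prod (μ.map C))
      =ᵐ[μ.map fun ω => (X ω, C ω)] condDensity μ X C := by
  have hrn :=
    Measure.rnDeriv_withDensity ((μ.map X).prod (μ.map C)) (measurable_condDensity μ X C)
  rw [withDensity_condDensity μ hX hC] at hrn
  exact (withDensity_condDensity μ hX hC ▸ withDensity_absolutelyContinuous _ _).ae_eq hrn

variable {μ}

theorem le_mutualInfo_of_le_integral_log_condDensity (hX : Measurable X) (hC : Measurable C)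
    {r : ℝ} (h : Integrable (fun z => Real.log (condDensity μ X C z).toReal)
        (μ.map fun ω => (X ω, C ω)) →
      r ≤ ∫ z, Real.log (condDensity μ X C z).toReal ∂(μ.map fun ω => (X ω, C ω))) :
    (r : EReal) ≤ mutualInfo μ X C := by
  have hlog : (fun z => Real.log ((μ.map fun ω => (X ω, C ω)).rnDeriv
      ((μ.map X).prod (μ.map C)) z).toReal)
      =ᵐ[μ.map fun ω => (X ω, C ω)] fun z => Real.log (condDensity μ X C z).toReal := by
    filter_upwards [rnDeriv_map_prodMk_ae_eq_condDensity μ hX hC] with z hz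
    rw [hz]
  rw [mutualInfo, klDivergence]
  split_ifs with hKL
  · rw [EReal.coe_le_coe_iff, integral_congr_ae hlog]
    exact h (hKL.2.congr hlog)
  · exact le_top

end MutualInfo
section Batch

variable {Ω 𝓧 𝒞 : Type*} [MeasurableSpace Ω] [MeasurableSpace 𝓧] [MeasurableSpace 𝒞]
  [Fintype 𝒞] [DiscreteMeasurableSpace 𝒞] (μ : Measure Ω) [IsProbabilityMeasure μ]
  {X : Ω → 𝓧} {C : Ω → 𝒞} {N : ℕ}

theorem map_fst_batchLaw (hX : Measurable X) (hpos : ∀ c, μ (C ⁻¹' {c}) ≠ 0) :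
    (batchLaw μ X C N).map Prod.fst = Measure.pi fun _ => μ.map C := by
  have := fun c => isProbabilityMeasure_condLaw μ hX (hpos c)
  have hfiber : ∀ cs : Fin N → 𝒞,
      ((Measure.pi fun j => condLaw μ X C (cs j)).map (fun xs => (cs, xs))).map Prod.fst
        = Measure.dirac cs := by
    intro cs
    rw [Measure.map_map measurable_fst measurable_prodMk_left]
    simp [Function.comp_def, Measure.map_const]
  rw [batchLaw, Measure.map_bind _ Measurable.of_discrete measurable_fst]
  simp_rw [hfiber]
  exact Measure.bind_dirac

theorem isProbabilityMeasure_batchLaw (hX : Measurable X) (hC : Measurable C)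
    (hpos : ∀ c, μ (C ⁻¹' {c}) ≠ 0) : IsProbabilityMeasure (batchLaw μ X C N) := by
  have := Measure.isProbabilityMeasure_map (μ := μ) hC.aemeasurable
  have : IsProbabilityMeasure ((batchLaw μ X C N).map Prod.fst) := by
    rw [map_fst_batchLaw μ hX hpos]
    infer_instance
  exact Measure.isProbabilityMeasure_of_map Prod.fst

theorem map_batchLaw_eval (hX : Measurable X) (hC : Measurable C)
    (hpos : ∀ c, μ (C ⁻¹' {c}) ≠ 0) (i : Fin N) :
    (batchLaw μ X C N).map (fun b => b.1 i) = μ.map C := by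
  have := Measure.isProbabilityMeasure_map (μ := μ) hC.aemeasurable
  rw [show (fun b : (Fin N → 𝒞) × (Fin N → 𝓧) => b.1 i) = Function.eval i ∘ Prod.fst from rfl,
    ← Measure.map_map (measurable_pi_apply i) measurable_fst, map_fst_batchLaw μ hX hpos,
    Measure.pi_map_eval]
  simp

theorem map_QSup_eq_prod (hX : Measurable X) (hC : Measurable C)
    (hpos : ∀ c, μ (C ⁻¹' {c}) ≠ 0) (i : Fin N) :
    (QSup μ X C N).map (fun z => (z.2, z.1.1 i)) = (μ.map X).prod (μ.map C) := by
  have := Measure.isProbabilityMeasure_map (μ := μ) hX.aemeasurable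
  have := isProbabilityMeasure_batchLaw μ hX hC hpos (N := N)
  have : (fun z : ((Fin N → 𝒞) × (Fin N → 𝓧)) × 𝓧 => (z.2, z.1.1 i))
      = Prod.swap ∘ Prod.map (fun b => b.1 i) id := rfl
  rw [this, QSup, ← Measure.map_map measurable_swap (by fun_prop),
    ← Measure.map_prod_map _ _ (by fun_prop) measurable_id, Measure.map_id,
    map_batchLaw_eval μ hX hC hpos, Measure.prod_swap]

theorem withDensity_QSup_eq_PSup (hX : Measurable X) (i : Fin N) :
    (QSup μ X C N).withDensity (fun z => condDensity μ X C (z.2, z.1.1 i)) = PSup μ X C N i := by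
  have hW : Measurable fun z : ((Fin N → 𝒞) × (Fin N → 𝓧)) × 𝓧 =>
      condDensity μ X C (z.2, z.1.1 i) :=
    (measurable_condDensity μ X C).comp (by fun_prop)
  ext s hs
  rw [withDensity_apply _ hs, QSup, ← lintegral_indicator hs,
    lintegral_prod _ (hW.indicator hs).aemeasurable, PSup,
    Measure.bind_apply hs (measurable_map_prodMk_comp (by fun_prop)).aemeasurable]
  refine lintegral_congr fun b => ?_
  have hfibre : ∀ x, s.indicator (fun z => condDensity μ X C (z.2, z.1.1 i)) (b, x)
      = (Prod.mk b ⁻¹' s).indicator ((condLaw μ X C (b.1 i)).rnDeriv (μ.map X)) x := fun x => rfl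
  simp_rw [hfibre]
  rw [lintegral_indicator (measurable_prodMk_left hs),
    ← withDensity_apply _ (measurable_prodMk_left hs),
    Measure.withDensity_rnDeriv_eq _ _ (condLaw_absolutelyContinuous μ hX _),
    Measure.map_apply measurable_prodMk_left hs]

theorem map_PSup_eq_map_prodMk (hX : Measurable X) (hC : Measurable C)
    (hpos : ∀ c, μ (C ⁻¹' {c}) ≠ 0) (i : Fin N) :
    (PSup μ X C N i).map (fun z => (z.2, z.1.1 i)) = μ.map fun ω => (X ω, C ω) := by
  rw [← withDensity_QSup_eq_PSup μ hX, ← withDensity_condDensity μ hX hC,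
    ← map_QSup_eq_prod μ hX hC hpos i,
    withDensity_map_eq_map_withDensity (by fun_prop) (measurable_condDensity μ X C)]
  rfl

end Batch

section Bound

variable {Ω 𝓧 𝒞 : Type*} [MeasurableSpace Ω] [MeasurableSpace 𝓧] [MeasurableSpace 𝒞]
  [Fintype 𝒞] [DiscreteMeasurableSpace 𝒞] {μ : Measure Ω} [IsProbabilityMeasure μ]
  {X : Ω → 𝓧} {C : Ω → 𝒞} {N : ℕ}

theorem isProbabilityMeasure_PSup (hX : Measurable X) (hC : Measurable C)
    (hpos : ∀ c, μ (C ⁻¹' {c}) ≠ 0) (i : Fin N) : IsProbabilityMeasure (PSup μ X C N i) := by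
  have : IsProbabilityMeasure ((PSup μ X C N i).map fun z => (z.2, z.1.1 i)) := by
    rw [map_PSup_eq_map_prodMk μ hX hC hpos i]
    exact Measure.isProbabilityMeasure_map (hX.prodMk hC).aemeasurable
  exact Measure.isProbabilityMeasure_of_map
    (fun z : ((Fin N → 𝒞) × (Fin N → 𝓧)) × 𝓧 => (z.2, z.1.1 i))

theorem integral_log_add_one_sub_integral_QSup_le (hX : Measurable X) (hC : Measurable C)
    (hpos : ∀ c, μ (C ⁻¹' {c}) ≠ 0) (i : Fin N) {g : ((Fin N → 𝒞) × (Fin N → 𝓧)) × 𝓧 → ℝ}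
    (hgpos : ∀ z, 0 < g z) (hgP : Integrable (fun z => Real.log (g z)) (PSup μ X C N i))
    (hgQ : Integrable g (QSup μ X C N))
    (hI : Integrable (fun z => Real.log (condDensity μ X C z).toReal)
      (μ.map fun ω => (X ω, C ω))) :
    ∫ z, Real.log (g z) ∂(PSup μ X C N i) + 1 - ∫ z, g z ∂(QSup μ X C N)
      ≤ ∫ z, Real.log (condDensity μ X C z).toReal ∂(μ.map fun ω => (X ω, C ω)) := by
  have := isProbabilityMeasure_PSup hX hC hpos i
  have hπ : Measurable fun z : ((Fin N → 𝒞) × (Fin N → 𝓧)) × 𝓧 => (z.2, z.1.1 i) := by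
    fun_prop
  have hlog : Measurable fun z => Real.log (condDensity μ X C z).toReal :=
    (measurable_condDensity μ X C).ennreal_toReal.log
  rw [← map_PSup_eq_map_prodMk μ hX hC hpos i] at hI ⊢
  rw [integral_map hπ.aemeasurable hlog.aestronglyMeasurable]
  exact integral_log_add_one_sub_integral_le ((measurable_condDensity μ X C).comp hπ)
    (withDensity_QSup_eq_PSup μ hX i) hgpos hgP hgQ
    ((integrable_map_measure hlog.aestronglyMeasurable hπ.aemeasurable).1 hI)

theorem one_add_log_sub_le_mutualInfo (hX : Measurable X) (hC : Measurable C)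
    (hpos : ∀ c, μ (C ⁻¹' {c}) ≠ 0) (hN : 0 < N)
    {s : Fin N → ((Fin N → 𝒞) × (Fin N → 𝓧)) × 𝓧 → ℝ} (hspos : ∀ i z, 0 < s i z)
    (hsP : ∀ i, Integrable (fun z => -Real.log (s i z)) (PSup μ X C N i))
    (hsQ : ∀ i, Integrable (s i) (QSup μ X C N)) :
    ((1 + Real.log N - (1 / N) * ∑ i, ∫ z, -Real.log (s i z) ∂(PSup μ X C N i)
        - ∑ i, ∫ z, s i z ∂(QSup μ X C N) : ℝ) : EReal) ≤ mutualInfo μ X C := by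
  refine le_mutualInfo_of_le_integral_log_condDensity hX hC fun hI => ?_
  have hNpos : (0 : ℝ) < N := Nat.cast_pos.2 hN
  -- Each term is the NWJ bound for the score `N * s i`.
  have hterm : ∀ i, 1 + Real.log N + ∫ z, Real.log (s i z) ∂(PSup μ X C N i)
      - N * ∫ z, s i z ∂(QSup μ X C N)
      ≤ ∫ z, Real.log (condDensity μ X C z).toReal ∂(μ.map fun ω => (X ω, C ω)) := by
    intro i
    have := isProbabilityMeasure_PSup hX hC hpos i
    have hlogP : Integrable (fun z => Real.log (s i z)) (PSup μ X C N i) := by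
      simpa using (hsP i).neg
    have hlog_mul : ∀ z, Real.log (N * s i z) = Real.log N + Real.log (s i z) :=
      fun z => Real.log_mul hNpos.ne' (hspos i z).ne'
    have hNWJ := integral_log_add_one_sub_integral_QSup_le hX hC hpos i
      (g := fun z => N * s i z) (fun z => mul_pos hNpos (hspos i z))
      (by simp_rw [hlog_mul]; exact (integrable_const _).add hlogP) ((hsQ i).const_mul _) hI
    simp_rw [hlog_mul] at hNWJ
    rw [integral_add (integrable_const _) hlogP, integral_const_mul, integral_const] at hNWJ
    simp only [probReal_univ, smul_eq_mul, one_mul] at hNWJ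
    linarith
  have hsum := Finset.sum_le_sum fun i (_ : i ∈ Finset.univ) => hterm i
  simp only [Finset.sum_sub_distrib, Finset.sum_add_distrib, ← Finset.mul_sum, Finset.sum_const,
    Finset.card_univ, Fintype.card_fin, nsmul_eq_mul] at hsum
  simp only [integral_neg, Finset.sum_neg_distrib]
  rw [← mul_le_mul_iff_of_pos_left hNpos]
  generalize ∑ i, ∫ z, Real.log (s i z) ∂(PSup μ X C N i) = A at hsum ⊢
  calc (N : ℝ) * (1 + Real.log N - 1 / N * -A - ∑ i, ∫ z, s i z ∂(QSup μ X C N))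
      = N * 1 + N * Real.log N + A - N * ∑ i, ∫ z, s i z ∂(QSup μ X C N) := by
        field_simp
        ring
    _ ≤ _ := hsum

end Bound

theorem measurable_centroid {𝓧 𝒞 : Type*} [MeasurableSpace 𝓧] [MeasurableSpace 𝒞] [Countable 𝒞]
    [MeasurableSingletonClass 𝒞] [DecidableEq 𝒞] {dz N : ℕ} {f : 𝓧 → EuclideanSpace ℝ (Fin dz)}
    (hf : Measurable f) (k : Fin N) :
    Measurable fun b : (Fin N → 𝒞) × (Fin N → 𝓧) => centroid f b.1 b.2 k :=
  measurable_from_prod_countable_right fun cs => by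
    simp only [centroid]
    exact (Finset.measurable_fun_sum _ fun p _ => hf.comp (measurable_pi_apply p)).fun_const_smul
      _

/-- Corollary 1: the SupCon loss with the adjustment term bounds
mutual information: `I(X;C) ≥ 1 + log N − I_NCE^{sup} − R^{sup}`. -/
theorem stmt_4 {Ω 𝓧 : Type*} [MeasurableSpace Ω] [MeasurableSpace 𝓧]
    {M dz : ℕ} (μ : Measure Ω) [IsProbabilityMeasure μ]
    (X : Ω → 𝓧) (C : Ω → Fin M) (hX : Measurable X) (hC : Measurable C)
    (hpos : ∀ c : Fin M, 0 < μ (C ⁻¹' {c}))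
    (N : ℕ) (hN : 1 ≤ N)
    (f : 𝓧 → EuclideanSpace ℝ (Fin dz)) (hf : Measurable f)
    (ψ : EuclideanSpace ℝ (Fin dz) → EuclideanSpace ℝ (Fin dz) → ℝ)
    (hψ : Measurable (fun p : EuclideanSpace ℝ (Fin dz) × EuclideanSpace ℝ (Fin dz) =>
      ψ p.1 p.2))
    (hintP : ∀ i : Fin N, Integrable (fun z : ((Fin N → Fin M) × (Fin N → 𝓧)) × 𝓧 =>
      -Real.log (Real.exp (ψ (f z.2) (centroid f z.1.1 z.1.2 i)) /
        ∑ j : Fin N, Real.exp (ψ (f z.2) (f (z.1.2 j))))) (PSup μ X C N i))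
    (hintQ : Integrable (fun z : ((Fin N → Fin M) × (Fin N → 𝓧)) × 𝓧 =>
      (∑ k : Fin N, Real.exp (ψ (f z.2) (centroid f z.1.1 z.1.2 k))) /
        ∑ k : Fin N, Real.exp (ψ (f z.2) (f (z.1.2 k)))) (QSup μ X C N)) :
    ((1 + Real.log N
        - (1 / N) * ∑ i : Fin N, ∫ z,
            -Real.log (Real.exp (ψ (f z.2) (centroid f z.1.1 z.1.2 i)) /
              ∑ j : Fin N, Real.exp (ψ (f z.2) (f (z.1.2 j)))) ∂(PSup μ X C N i)
        - ∫ z, (∑ k : Fin N, Real.exp (ψ (f z.2) (centroid f z.1.1 z.1.2 k))) /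
            (∑ k : Fin N, Real.exp (ψ (f z.2) (f (z.1.2 k)))) ∂(QSup μ X C N) : ℝ) : EReal)
      ≤ mutualInfo μ X C := by
  set s : Fin N → ((Fin N → Fin M) × (Fin N → 𝓧)) × 𝓧 → ℝ := fun k z =>
    Real.exp (ψ (f z.2) (centroid f z.1.1 z.1.2 k)) / ∑ j, Real.exp (ψ (f z.2) (f (z.1.2 j)))
  have hspos : ∀ k z, 0 < s k z := fun k z =>
    div_pos (Real.exp_pos _)
      (Finset.sum_pos (fun _ _ => Real.exp_pos _) ⟨⟨0, hN⟩, Finset.mem_univ _⟩)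
  have hs : ∀ k, Measurable (s k) := fun k => by
    have := measurable_centroid (𝒞 := Fin M) hf k
    fun_prop
  have hsum : ∀ z, (∑ k, Real.exp (ψ (f z.2) (centroid f z.1.1 z.1.2 k)))
      / ∑ k, Real.exp (ψ (f z.2) (f (z.1.2 k))) = ∑ k, s k z := fun z => Finset.sum_div ..
  simp_rw [hsum] at hintQ ⊢
  have hsQ : ∀ k, Integrable (s k) (QSup μ X C N) := fun k =>
    hintQ.mono' (hs k).aestronglyMeasurable <| ae_of_all _ fun z => by
      rw [Real.norm_of_nonneg (hspos k z).le]
      exact Finset.single_le_sum (fun j _ => (hspos j z).le) (Finset.mem_univ k)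
  rw [integral_finsetSum _ fun k _ => hsQ k]
  exact one_add_log_sub_le_mutualInfo hX hC (fun c => (hpos c).ne') hN hspos hintP hsQ
end

section
/- With the optimal score s*(x, c) := log( p(c|x) / p(c) ), the shifted SoftNCE loss converges to the mutual information: lim_{N→∞} ( log N − L_N(s*) ) = I(X;C). (Third item of Proposition 2.) -/
/-!
Let `ν` be the law of `X`, `π c = P(C = c)` and `ρ c = p(c|·) / π c`, the density of the law of
`X` given `C = c` with respect to `ν`. Conditionally on `X = x`, the optimal score turns the
`i`-th loss term into `E[ρ_{C_i} log (∑_j ρ_{C_j} / ρ_{C_i})]` with `C_1, …, C_N` i.i.d. of law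
`π`, so `log N` minus it equals `∑_c π c ρ_c log ρ_c`, whose `ν`-integral is `I(X;C)`, minus
`E[ρ_{C_i} log Ā]` with `Ā = N⁻¹ ∑_j ρ_{C_j}`. As `∑_c π c ρ_c = 1` and `ε ≤ ρ_c ≤ R`, the expansion
`log Ā = (Ā - 1) + O((Ā - 1)²)` together with `E[ρ_{C_i} (Ā - 1)] = E[(Ā - 1)²] = Var_π(ρ) / N`
bounds this error by `(1 + R / ε) R / N`, uniformly in `x`.
-/

open MeasureTheory ProbabilityTheory Filter
open scoped Classical ENNReal Topology

/-- The law `P_i` of `(X, (C_1, …, C_N))` under which `C_1, …, C_N` are i.i.d. copies of `C`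
and `X` is drawn from the conditional law of `X` given `C = C_i`, conditionally
independently of the other `C_j`. -/
noncomputable def Pmeas {Ω 𝓧 𝒞 : Type*} [MeasurableSpace Ω] [MeasurableSpace 𝓧]
    [MeasurableSpace 𝒞] (μ : Measure Ω) (X : Ω → 𝓧) (C : Ω → 𝒞) (N : ℕ) (i : Fin N) :
    Measure (𝓧 × (Fin N → 𝒞)) :=
  (Measure.pi fun _ : Fin N => μ.map C).bind
    (fun cs => (condLaw μ X C (cs i)).map (fun x => (x, cs)))

/-- The law `Q` of `(X, (C_1, …, C_N))` under which `X` has the marginal law of `X` and is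
independent of `C_1, …, C_N`, which are i.i.d. copies of `C`. -/
noncomputable def Qmeas {Ω 𝓧 𝒞 : Type*} [MeasurableSpace Ω] [MeasurableSpace 𝓧]
    [MeasurableSpace 𝒞] (μ : Measure Ω) (X : Ω → 𝓧) (C : Ω → 𝒞) (N : ℕ) :
    Measure (𝓧 × (Fin N → 𝒞)) :=
  (μ.map X).prod (Measure.pi fun _ : Fin N => μ.map C)

theorem test : True := trivial

/-- The `N`-sample contrastive loss
`L_N(s) := (1/N) Σ_i E_{P_i}[ −log( e^{s(X,C_i)} / Σ_j e^{s(X,C_j)} ) ]`. -/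
noncomputable def contrastiveLoss {Ω 𝓧 : Type*} [MeasurableSpace Ω] [MeasurableSpace 𝓧]
    {M : ℕ} (μ : Measure Ω) (X : Ω → 𝓧) (C : Ω → Fin M) (N : ℕ)
    (s : 𝓧 → Fin M → ℝ) : ℝ :=
  (1 / N) * ∑ i : Fin N, ∫ p, -Real.log (Real.exp (s p.1 (p.2 i)) /
    ∑ j : Fin N, Real.exp (s p.1 (p.2 j))) ∂(Pmeas μ X C N i)

open Real

section ProductWeights

variable {α : Type*} [Fintype α] {N : ℕ} {p : α → ℝ}

theorem sum_prod_mul_apply_mul_apply (hp : ∑ a, p a = 1) (g h : α → ℝ) (i j : Fin N) :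
    ∑ cs : Fin N → α, (∏ k, p (cs k)) * (g (cs i) * h (cs j)) =
      if i = j then ∑ a, p a * (g a * h a) else (∑ a, p a * g a) * ∑ a, p a * h a := by
  have hfactor : ∀ cs : Fin N → α, (∏ k, p (cs k)) * (g (cs i) * h (cs j)) =
      ∏ k, p (cs k) * ((if k = i then g (cs k) else 1) * (if k = j then h (cs k) else 1)) := by
    intro cs
    rw [Finset.prod_mul_distrib, Finset.prod_mul_distrib, Fintype.prod_ite_eq',
      Fintype.prod_ite_eq']
  simp_rw [hfactor]
  rw [← Fintype.prod_sum fun k a => p a * ((if k = i then g a else 1) * (if k = j then h a else 1))]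
  split_ifs with hij
  · subst hij
    rw [← Fintype.prod_ite_eq' i fun _ => ∑ a, p a * (g a * h a)]
    refine Finset.prod_congr rfl fun k _ => ?_
    split_ifs <;> simp [hp]
  · rw [← Fintype.prod_ite_eq' i fun _ => ∑ a, p a * g a,
      ← Fintype.prod_ite_eq' j fun _ => ∑ a, p a * h a, ← Finset.prod_mul_distrib]
    refine Finset.prod_congr rfl fun k _ => ?_
    by_cases hki : k = i
    · subst hki; simp [hij]
    · by_cases hkj : k = j <;> simp [hki, hkj, hp, Ne.symm hij]

theorem sum_prod_mul_apply (hp : ∑ a, p a = 1) (g : α → ℝ) (i : Fin N) :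
    ∑ cs : Fin N → α, (∏ k, p (cs k)) * g (cs i) = ∑ a, p a * g a := by
  simpa using sum_prod_mul_apply_mul_apply hp g 1 i i

theorem sum_prod_mul_apply_mul_sum_of_mean_zero (hp : ∑ a, p a = 1) (g : α → ℝ) {u : α → ℝ}
    (hu : ∑ a, p a * u a = 0) (i : Fin N) :
    ∑ cs : Fin N → α, (∏ k, p (cs k)) * (g (cs i) * ∑ j, u (cs j)) =
      ∑ a, p a * (g a * u a) := by
  simp_rw [Finset.mul_sum]
  rw [Finset.sum_comm]
  simp_rw [sum_prod_mul_apply_mul_apply hp, hu, mul_zero]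
  simp

theorem sum_prod_mul_sq_sum_of_mean_zero (hp : ∑ a, p a = 1) {u : α → ℝ}
    (hu : ∑ a, p a * u a = 0) :
    ∑ cs : Fin N → α, (∏ k, p (cs k)) * (∑ j, u (cs j)) ^ 2 = N * ∑ a, p a * u a ^ 2 := by
  have hexpand : ∀ cs : Fin N → α, (∏ k, p (cs k)) * (∑ j, u (cs j)) ^ 2 =
      ∑ k, (∏ k, p (cs k)) * (u (cs k) * ∑ j, u (cs j)) := by
    intro cs
    rw [sq, Finset.sum_mul, Finset.mul_sum]
  simp_rw [hexpand]
  rw [Finset.sum_comm]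
  simp_rw [sum_prod_mul_apply_mul_sum_of_mean_zero hp u hu]
  simp [sq]

theorem sum_mul_sub_one_eq_zero (hp : ∑ a, p a = 1) {ρ : α → ℝ} (hρ : ∑ a, p a * ρ a = 1) :
    ∑ a, p a * (ρ a - 1) = 0 := by
  simp [mul_sub, Finset.sum_sub_distrib, hρ, hp]

theorem sum_mul_sub_one_sq_le (hp0 : ∀ a, 0 ≤ p a) (hp : ∑ a, p a = 1) {ρ : α → ℝ}
    (hρ : ∑ a, p a * ρ a = 1) {R : ℝ} (hρ0 : ∀ a, 0 ≤ ρ a) (hρR : ∀ a, ρ a ≤ R) :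
    ∑ a, p a * (ρ a - 1) ^ 2 ≤ R :=
  calc ∑ a, p a * (ρ a - 1) ^ 2 ≤ ∑ a, p a * (R * ρ a - 2 * ρ a + 1) :=
        Finset.sum_le_sum fun a _ => mul_le_mul_of_nonneg_left
          (by nlinarith [hρ0 a, hρR a]) (hp0 a)
    _ = R * ∑ a, p a * ρ a - 2 * ∑ a, p a * ρ a + ∑ a, p a := by
        simp only [Finset.mul_sum, ← Finset.sum_sub_distrib, ← Finset.sum_add_distrib]
        exact Finset.sum_congr rfl fun a _ => by ring
    _ = R - 1 := by rw [hρ, hp]; ring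
    _ ≤ R := by linarith

theorem sum_div_card_sub_one {N : ℕ} (hN : N ≠ 0) (x : Fin N → ℝ) :
    (∑ j, x j) / N - 1 = (∑ j, (x j - 1)) / N := by
  simp only [Finset.sum_sub_distrib, Finset.sum_const, Finset.card_univ, Fintype.card_fin]
  field_simp
  simp

theorem sum_prod_mul_apply_mul_average_sub_one (hp : ∑ a, p a = 1) {ρ : α → ℝ}
    (hρ : ∑ a, p a * ρ a = 1) (i : Fin N) :
    ∑ cs : Fin N → α, (∏ k, p (cs k)) * (ρ (cs i) * ((∑ j, ρ (cs j)) / N - 1)) =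
      (∑ a, p a * (ρ a - 1) ^ 2) / N := by
  simp_rw [sum_div_card_sub_one i.pos.ne', mul_div_assoc', ← Finset.sum_div,
    sum_prod_mul_apply_mul_sum_of_mean_zero hp ρ (sum_mul_sub_one_eq_zero hp hρ)]
  have hsplit : ∀ a, p a * (ρ a * (ρ a - 1)) = p a * (ρ a - 1) ^ 2 + p a * (ρ a - 1) :=
    fun a => by ring
  simp_rw [hsplit, Finset.sum_add_distrib, sum_mul_sub_one_eq_zero hp hρ, add_zero]

theorem sum_prod_mul_average_sub_one_sq (hp : ∑ a, p a = 1) {ρ : α → ℝ}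
    (hρ : ∑ a, p a * ρ a = 1) (hN : N ≠ 0) :
    ∑ cs : Fin N → α, (∏ k, p (cs k)) * ((∑ j, ρ (cs j)) / N - 1) ^ 2 =
      (∑ a, p a * (ρ a - 1) ^ 2) / (N : ℝ) := by
  simp_rw [sum_div_card_sub_one hN, div_pow, mul_div_assoc', ← Finset.sum_div,
    sum_prod_mul_sq_sum_of_mean_zero hp (sum_mul_sub_one_eq_zero hp hρ)]
  field_simp

theorem abs_log_sub_sub_one_le {ε a : ℝ} (hε : 0 < ε) (ha : ε ≤ a) :
    |log a - (a - 1)| ≤ (a - 1) ^ 2 / ε := by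
  have ha0 : 0 < a := hε.trans_le ha
  have hlower : 1 - a⁻¹ ≤ log a := one_sub_inv_le_log_of_pos ha0
  have hquad : (a - 1) ^ 2 / a ≤ (a - 1) ^ 2 / ε := by gcongr
  have hinv : 1 - a⁻¹ = (a - 1) - (a - 1) ^ 2 / a := by field_simp; ring
  rw [abs_le]
  constructor <;> linarith [log_le_sub_one_of_pos ha0, sq_nonneg (a - 1)]

variable (p) in
theorem abs_sum_prod_mul_log_average_le (hp0 : ∀ a, 0 ≤ p a) (hp : ∑ a, p a = 1) {ρ : α → ℝ}
    (hρ : ∑ a, p a * ρ a = 1) {ε R : ℝ} (hε : 0 < ε) (hερ : ∀ a, ε ≤ ρ a) (hρR : ∀ a, ρ a ≤ R)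
    (i : Fin N) :
    |∑ cs : Fin N → α, (∏ k, p (cs k)) * (ρ (cs i) * log ((∑ j, ρ (cs j)) / N))| ≤
      (1 + R / ε) * R / N := by
  have hN : (0 : ℝ) < N := by exact_mod_cast i.pos
  have hρ0 : ∀ a, 0 ≤ ρ a := fun a => hε.le.trans (hερ a)
  set V := ∑ a, p a * (ρ a - 1) ^ 2
  have hV0 : 0 ≤ V := Finset.sum_nonneg fun a _ => mul_nonneg (hp0 a) (sq_nonneg _)
  have hVR : V ≤ R := sum_mul_sub_one_sq_le hp0 hp hρ hρ0 hρR
  have hweight : ∀ cs : Fin N → α, 0 ≤ ∏ k, p (cs k) := fun cs =>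
    Finset.prod_nonneg fun k _ => hp0 (cs k)
  have hremainder : ∀ cs : Fin N → α,
      |ρ (cs i) * log ((∑ j, ρ (cs j)) / N) - ρ (cs i) * ((∑ j, ρ (cs j)) / N - 1)| ≤
        R / ε * ((∑ j, ρ (cs j)) / N - 1) ^ 2 := by
    intro cs
    have hε_avg : ε ≤ (∑ j, ρ (cs j)) / N := by
      rw [le_div_iff₀ hN]
      simpa [mul_comm] using Finset.sum_le_sum fun j (_ : j ∈ Finset.univ) => hερ (cs j)
    rw [← mul_sub, abs_mul, abs_of_nonneg (hρ0 _), div_mul_eq_mul_div, mul_div_assoc]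
    exact mul_le_mul (hρR _) (abs_log_sub_sub_one_le hε hε_avg) (abs_nonneg _)
      ((hρ0 (cs i)).trans (hρR (cs i)))
  calc |∑ cs : Fin N → α, (∏ k, p (cs k)) * (ρ (cs i) * log ((∑ j, ρ (cs j)) / N))|
      = |∑ cs : Fin N → α, (∏ k, p (cs k)) * (ρ (cs i) * ((∑ j, ρ (cs j)) / N - 1)) +
          ∑ cs : Fin N → α, (∏ k, p (cs k)) * (ρ (cs i) * log ((∑ j, ρ (cs j)) / N) -
            ρ (cs i) * ((∑ j, ρ (cs j)) / N - 1))| := by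
        rw [← Finset.sum_add_distrib]
        simp_rw [← mul_add, add_sub_cancel]
    _ ≤ V / N + ∑ cs : Fin N → α, (∏ k, p (cs k)) * (R / ε * ((∑ j, ρ (cs j)) / N - 1) ^ 2) := by
        rw [sum_prod_mul_apply_mul_average_sub_one hp hρ]
        refine (abs_add_le _ _).trans (add_le_add (abs_of_nonneg (by positivity)).le ?_)
        refine (Finset.abs_sum_le_sum_abs _ _).trans (Finset.sum_le_sum fun cs _ => ?_)
        rw [abs_mul, abs_of_nonneg (hweight cs)]
        exact mul_le_mul_of_nonneg_left (hremainder cs) (hweight cs)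
    _ = (1 + R / ε) * V / N := by
        simp_rw [mul_left_comm _ (R / ε), ← Finset.mul_sum,
          sum_prod_mul_average_sub_one_sq hp hρ i.pos.ne']
        ring
    _ ≤ (1 + R / ε) * R / N := by
        have : 0 ≤ 1 + R / ε := by have := hV0.trans hVR; positivity
        gcongr

variable (p) in
theorem abs_log_card_sub_sum_prod_mul_neg_log_sub_le (hp0 : ∀ a, 0 ≤ p a) (hp : ∑ a, p a = 1)
    {ρ : α → ℝ} (hρ : ∑ a, p a * ρ a = 1) {ε R : ℝ} (hε : 0 < ε) (hερ : ∀ a, ε ≤ ρ a)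
    (hρR : ∀ a, ρ a ≤ R) (i : Fin N) :
    |log N - ∑ cs : Fin N → α, (∏ k, p (cs k)) * (ρ (cs i) * -log (ρ (cs i) / ∑ j, ρ (cs j))) -
        ∑ a, p a * (ρ a * log (ρ a))| ≤ (1 + R / ε) * R / N := by
  have hN : (0 : ℝ) < N := by exact_mod_cast i.pos
  have hρ0 : ∀ a, 0 < ρ a := fun a => hε.trans_le (hερ a)
  have hsplit : ∀ cs : Fin N → α, -log (ρ (cs i) / ∑ j, ρ (cs j)) =
      log ((∑ j, ρ (cs j)) / N) + log N - log (ρ (cs i)) := by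
    intro cs
    have hsum : 0 < ∑ j, ρ (cs j) := Finset.sum_pos (fun j _ => hρ0 (cs j)) ⟨i, by simp⟩
    rw [log_div (hρ0 _).ne' hsum.ne', log_div hsum.ne' hN.ne']
    ring
  have hmass : ∑ cs : Fin N → α, (∏ k, p (cs k)) * ρ (cs i) = 1 := by
    rw [sum_prod_mul_apply hp, hρ]
  have hentropy := sum_prod_mul_apply hp (fun a => ρ a * log (ρ a)) i
  simp_rw [hsplit, mul_sub, mul_add, Finset.sum_sub_distrib, Finset.sum_add_distrib,
    ← mul_assoc, ← Finset.sum_mul, hmass, mul_assoc, hentropy]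
  convert abs_sum_prod_mul_log_average_le p hp0 hp hρ hε hερ hρR i using 1
  rw [← abs_neg]
  congr 1
  ring

end ProductWeights

theorem klDivergence_withDensity_ofReal {Ω : Type*} [MeasurableSpace Ω] {Q : Measure Ω}
    [SigmaFinite Q] {f : Ω → ℝ} (hf : Measurable f) (hf0 : 0 ≤ᵐ[Q] f)
    (hint : Integrable (fun ω => f ω * log (f ω)) Q) :
    klDivergence (Q.withDensity fun ω => ENNReal.ofReal (f ω)) Q =
      ((∫ ω, f ω * log (f ω) ∂Q : ℝ) : EReal) := by
  set P := Q.withDensity fun ω => ENNReal.ofReal (f ω)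
  have hPQ : P ≪ Q := withDensity_absolutelyContinuous _ _
  have hnn : Measurable fun ω => (f ω).toNNReal := hf.real_toNNReal
  have hrn : (fun ω => log (P.rnDeriv Q ω).toReal) =ᵐ[Q] fun ω => log (f ω) := by
    filter_upwards [Measure.rnDeriv_withDensity Q hf.ennreal_ofReal, hf0] with ω hω hω0
    rw [hω, ENNReal.toReal_ofReal hω0]
  have hsmul : (fun ω => (f ω).toNNReal • log (f ω)) =ᵐ[Q] fun ω => f ω * log (f ω) := by
    filter_upwards [hf0] with ω hω0
    rw [NNReal.smul_def, Real.coe_toNNReal _ hω0, smul_eq_mul]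
  have hlog : Integrable (fun ω => log (f ω)) P :=
    (integrable_withDensity_iff_integrable_smul hnn).2 (hint.congr hsmul.symm)
  rw [klDivergence, if_pos ⟨hPQ, hlog.congr (hPQ.ae_le hrn.symm)⟩,
    integral_congr_ae (hPQ.ae_le hrn)]
  exact congrArg _ ((integral_withDensity_eq_integral_smul hnn _).trans (integral_congr_ae hsmul))

section ConditionalLaw

variable {Ω 𝓧 β : Type*} [MeasurableSpace Ω] [MeasurableSpace 𝓧] [MeasurableSpace β]
  [MeasurableSingletonClass β] {μ : Measure Ω} {X : Ω → 𝓧} {C : Ω → β}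

theorem integrable_of_forall_setIntegral_eq_measureReal_inter [IsFiniteMeasure μ] {S : Set Ω}
    (hS : μ S ≠ 0) {g : 𝓧 → ℝ}
    (hg : ∀ A, MeasurableSet A → ∫ x in A, g x ∂(μ.map X) = μ.real (X ⁻¹' A ∩ S)) :
    Integrable g (μ.map X) := by
  refine Integrable.of_integral_ne_zero ?_
  have := hg Set.univ MeasurableSet.univ
  rw [Measure.restrict_univ, Set.preimage_univ, Set.univ_inter] at this
  rw [this]
  exact (ENNReal.toReal_pos hS (measure_ne_top μ _)).ne'

theorem sum_measure_inter_preimage_singleton [Fintype β] (hC : Measurable C) (S : Set Ω) :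
    ∑ c, μ (S ∩ C ⁻¹' {c}) = μ S := by
  have := sum_measure_preimage_singleton (μ := μ.restrict S) Finset.univ
    fun c _ => hC (measurableSet_singleton c)
  simpa [Measure.restrict_apply (hC (measurableSet_singleton _)), Set.inter_comm] using this

theorem ae_sum_eq_one_of_forall_setIntegral_eq [Fintype β] [IsFiniteMeasure μ] (hX : Measurable X)
    (hC : Measurable C) (hc : ∀ c, μ (C ⁻¹' {c}) ≠ 0) {g : β → 𝓧 → ℝ}
    (hg : ∀ c A, MeasurableSet A → ∫ x in A, g c x ∂(μ.map X) = μ.real (X ⁻¹' A ∩ C ⁻¹' {c})) :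
    ∀ᵐ x ∂(μ.map X), ∑ c, g c x = 1 := by
  have hint : Integrable (fun x => ∑ c, g c x) (μ.map X) :=
    integrable_finsetSum _ fun c _ =>
      integrable_of_forall_setIntegral_eq_measureReal_inter (hc c) (hg c)
  refine ae_eq_of_forall_setIntegral_eq_of_sigmaFinite (fun A _ _ => hint.integrableOn)
    (fun A _ _ => integrableOn_const) fun A hA _ => ?_
  rw [integral_finsetSum _ fun c _ =>
      (integrable_of_forall_setIntegral_eq_measureReal_inter (hc c) (hg c)).integrableOn]
  simp_rw [hg _ A hA, measureReal_def]
  rw [← ENNReal.toReal_sum fun c _ => measure_ne_top μ _, sum_measure_inter_preimage_singleton hC,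
    setIntegral_const, smul_eq_mul, mul_one, measureReal_def, Measure.map_apply hX hA]

theorem condLaw_eq_withDensity [IsFiniteMeasure μ] (hX : Measurable X) (hC : Measurable C)
    {c : β} (hc : μ (C ⁻¹' {c}) ≠ 0) {g : 𝓧 → ℝ} (hg0 : 0 ≤ᵐ[μ.map X] g)
    (hg : ∀ A, MeasurableSet A → ∫ x in A, g x ∂(μ.map X) = μ.real (X ⁻¹' A ∩ C ⁻¹' {c})) :
    condLaw μ X C c =
      (μ.map X).withDensity fun x => ENNReal.ofReal (g x / μ.real (C ⁻¹' {c})) := by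
  have hπ : 0 < μ.real (C ⁻¹' {c}) := ENNReal.toReal_pos hc (measure_ne_top μ _)
  ext A hA
  rw [condLaw, Measure.map_apply hX hA, cond_apply (hC (measurableSet_singleton c)),
    withDensity_apply _ hA, ← ofReal_integral_eq_lintegral_ofReal
      ((integrable_of_forall_setIntegral_eq_measureReal_inter hc hg).integrableOn.div_const _)
      (ae_restrict_of_ae (hg0.mono fun x hx => div_nonneg hx hπ.le)),
    integral_div, hg A hA, ENNReal.ofReal_div_of_pos hπ, measureReal_def, measureReal_def,
    ENNReal.ofReal_toReal (measure_ne_top μ _), ENNReal.ofReal_toReal (measure_ne_top μ _),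
    ENNReal.div_eq_inv_mul, Set.inter_comm]

theorem map_prodMk_eq_withDensity [Fintype β] [IsFiniteMeasure μ] (hX : Measurable X)
    (hC : Measurable C) {f : β → 𝓧 → ℝ≥0∞} (hf : ∀ c, Measurable (f c))
    (hcond : ∀ c, condLaw μ X C c = (μ.map X).withDensity (f c)) :
    μ.map (fun ω => (X ω, C ω)) = ((μ.map X).prod (μ.map C)).withDensity fun p => f p.2 p.1 := by
  have hF : Measurable fun p : 𝓧 × β => f p.2 p.1 :=
    measurable_from_prod_countable_left fun c => hf c
  ext s hs
  have hsection : ∀ c, MeasurableSet ((·, c) ⁻¹' s) := fun c => measurable_prodMk_right hs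
  have hindicator : ∀ c x, s.indicator (fun p => f p.2 p.1) (x, c) =
      ((·, c) ⁻¹' s).indicator (f c) x := fun c x => by
    by_cases h : (x, c) ∈ s <;> simp [h]
  rw [Measure.map_apply (hX.prodMk hC) hs, withDensity_apply _ hs, ← lintegral_indicator hs,
    lintegral_prod_symm _ (hF.indicator hs).aemeasurable, lintegral_fintype,
    ← sum_measure_inter_preimage_singleton hC]
  refine Finset.sum_congr rfl fun c _ => ?_
  simp_rw [hindicator, lintegral_indicator (hsection c), ← withDensity_apply _ (hsection c),
    ← hcond, condLaw, Measure.map_apply hX (hsection c),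
    Measure.map_apply hC (measurableSet_singleton c),
    cond_mul_eq_inter (hC (measurableSet_singleton c))]
  congr 1
  ext ω
  simp +contextual [and_comm]

theorem mutualInfo_eq_integral [Fintype β] [IsFiniteMeasure μ] (hX : Measurable X)
    (hC : Measurable C) {ρ : β → 𝓧 → ℝ} (hρ : ∀ c, Measurable (ρ c))
    (hρ0 : ∀ c, 0 ≤ᵐ[μ.map X] ρ c)
    (hcond : ∀ c, condLaw μ X C c = (μ.map X).withDensity fun x => ENNReal.ofReal (ρ c x))
    (hint : ∀ c, Integrable (fun x => ρ c x * log (ρ c x)) (μ.map X)) :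
    mutualInfo μ X C =
      ((∫ x, ∑ c, μ.real (C ⁻¹' {c}) * (ρ c x * log (ρ c x)) ∂(μ.map X) : ℝ) : EReal) := by
  have hF : Measurable fun p : 𝓧 × β => ρ p.2 p.1 :=
    measurable_from_prod_countable_left fun c => hρ c
  have hF0 : 0 ≤ᵐ[(μ.map X).prod (μ.map C)] fun p => ρ p.2 p.1 :=
    (Measure.quasiMeasurePreserving_fst.ae (ae_all_iff.2 hρ0)).mono fun p hp => hp p.2
  have hFint : Integrable (fun p : 𝓧 × β => ρ p.2 p.1 * log (ρ p.2 p.1))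
      ((μ.map X).prod (μ.map C)) :=
    (integrable_prod_iff' (hF.mul (measurable_log.comp hF)).aestronglyMeasurable).2
      ⟨ae_of_all _ hint, Integrable.of_finite⟩
  rw [mutualInfo, map_prodMk_eq_withDensity hX hC (fun c => (hρ c).ennreal_ofReal) hcond,
    klDivergence_withDensity_ofReal hF hF0 hFint, integral_prod _ hFint]
  refine congrArg _ (integral_congr_ae (ae_of_all _ fun x => ?_))
  dsimp only
  rw [integral_fintype Integrable.of_finite]
  simp_rw [map_measureReal_apply hC (measurableSet_singleton _), smul_eq_mul]

theorem Pmeas_eq_sum [Fintype β] [IsFiniteMeasure μ] (hC : Measurable C) (N : ℕ) (i : Fin N) :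
    Pmeas μ X C N i =
      ∑ cs : Fin N → β, (∏ k, μ (C ⁻¹' {cs k})) • (condLaw μ X C (cs i)).map (·, cs) := by
  ext s hs
  rw [Pmeas, Measure.bind_apply hs (measurable_of_countable _).aemeasurable, lintegral_fintype,
    Measure.finsetSum_apply]
  refine Finset.sum_congr rfl fun cs _ => ?_
  rw [Measure.smul_apply, smul_eq_mul, mul_comm, ← Set.univ_pi_singleton, Measure.pi_pi]
  simp_rw [Measure.map_apply hC (measurableSet_singleton _)]

theorem integral_Pmeas [Fintype β] [IsFiniteMeasure μ] (hC : Measurable C) {ρ : β → 𝓧 → ℝ}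
    (hρ : ∀ c, Measurable (ρ c)) (hρ0 : ∀ c, 0 ≤ᵐ[μ.map X] ρ c)
    (hcond : ∀ c, condLaw μ X C c = (μ.map X).withDensity fun x => ENNReal.ofReal (ρ c x))
    {N : ℕ} (i : Fin N) {ℓ : 𝓧 × (Fin N → β) → ℝ} (hℓ : Measurable ℓ)
    (hint : ∀ cs, Integrable (fun x => ρ (cs i) x * ℓ (x, cs)) (μ.map X)) :
    ∫ p, ℓ p ∂(Pmeas μ X C N i) =
      ∫ x, ∑ cs : Fin N → β, (∏ k, μ.real (C ⁻¹' {cs k})) * (ρ (cs i) x * ℓ (x, cs))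
        ∂(μ.map X) := by
  have hsmul : ∀ c (g : 𝓧 → ℝ),
      (fun x => (ρ c x).toNNReal • g x) =ᵐ[μ.map X] fun x => ρ c x * g x :=
    fun c g => (hρ0 c).mono fun x hx => by
      dsimp only
      rw [NNReal.smul_def, Real.coe_toNNReal _ hx, smul_eq_mul]
  have hint' : ∀ cs : Fin N → β, Integrable ℓ ((condLaw μ X C (cs i)).map (·, cs)) := fun cs => by
    rw [integrable_map_measure hℓ.aestronglyMeasurable measurable_prodMk_right.aemeasurable,
      hcond]
    exact (integrable_withDensity_iff_integrable_smul (hρ _).real_toNNReal).2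
      ((hint cs).congr (hsmul _ _).symm)
  rw [Pmeas_eq_sum hC, integral_finsetSum_measure fun cs _ =>
      (hint' cs).smul_measure (ENNReal.prod_ne_top fun k _ => measure_ne_top μ _),
    integral_finsetSum _ fun cs _ => (hint cs).const_mul _]
  refine Finset.sum_congr rfl fun cs _ => ?_
  rw [integral_smul_measure, integral_const_mul, ENNReal.toReal_prod, smul_eq_mul,
    integral_map measurable_prodMk_right.aemeasurable hℓ.aestronglyMeasurable, hcond]
  exact congrArg _ ((integral_withDensity_eq_integral_smul (hρ _).real_toNNReal _).trans
    (integral_congr_ae (hsmul _ _)))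

end ConditionalLaw

theorem abs_mul_neg_log_div_le {a b : ℝ} (ha : 0 < a) (hab : a ≤ b) : |a * -log (a / b)| ≤ b := by
  rw [← log_inv, inv_div, abs_of_nonneg (mul_nonneg ha.le (log_nonneg ((one_le_div ha).2 hab)))]
  calc a * log (b / a) ≤ a * (b / a - 1) :=
        mul_le_mul_of_nonneg_left (log_le_sub_one_of_pos (div_pos (ha.trans_le hab) ha)) ha.le
    _ = b - a := by field_simp
    _ ≤ b := by linarith

theorem abs_mul_log_le_sq_add_one {t : ℝ} (ht : 0 ≤ t) : |t * log t| ≤ t ^ 2 + 1 := by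
  rcases ht.eq_or_lt with rfl | ht
  · simp
  have hlower := mul_le_mul_of_nonneg_left (one_sub_inv_le_log_of_pos ht) ht.le
  have hupper := mul_le_mul_of_nonneg_left (log_le_sub_one_of_pos ht) ht.le
  rw [mul_sub, mul_one, mul_inv_cancel₀ ht.ne'] at hlower
  rw [abs_le]
  constructor <;> nlinarith

theorem integrable_mul_log_of_ae_le {α : Type*} [MeasurableSpace α] {ν : Measure α}
    [IsFiniteMeasure ν] {f : α → ℝ} (hf : Measurable f) {R : ℝ}
    (hbound : ∀ᵐ x ∂ν, 0 ≤ f x ∧ f x ≤ R) : Integrable (fun x => f x * log (f x)) ν := by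
  refine Integrable.of_bound (by fun_prop) (R ^ 2 + 1) ?_
  filter_upwards [hbound] with x hx
  rw [Real.norm_eq_abs]
  refine (abs_mul_log_le_sq_add_one hx.1).trans ?_
  gcongr
  exacts [hx.1, hx.2]

theorem abs_sub_one_div_mul_sum_sub_le {N : ℕ} (hN : 0 < N) {a : Fin N → ℝ} {b c δ : ℝ}
    (h : ∀ i, |b - a i - c| ≤ δ) : |b - 1 / N * ∑ i, a i - c| ≤ δ := by
  have hN' : (0 : ℝ) < N := by exact_mod_cast hN
  have hmean : b - 1 / N * ∑ i, a i - c = 1 / N * ∑ i, (b - a i - c) := by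
    simp only [Finset.sum_sub_distrib, Finset.sum_const, Finset.card_univ, Fintype.card_fin,
      nsmul_eq_mul]
    field_simp
  rw [hmean, abs_mul, abs_of_pos (by positivity)]
  calc 1 / N * |∑ i, (b - a i - c)| ≤ 1 / N * ∑ _i : Fin N, δ := by
        gcongr
        exact (Finset.abs_sum_le_sum_abs _ _).trans (Finset.sum_le_sum fun i _ => h i)
    _ = δ := by field_simp; simp

section ContrastiveLoss

variable {Ω 𝓧 : Type*} [MeasurableSpace Ω] [MeasurableSpace 𝓧] {M : ℕ} {μ : Measure Ω}
  [IsProbabilityMeasure μ] {X : Ω → 𝓧} {C : Ω → Fin M} {ρ : Fin M → 𝓧 → ℝ} {ε R : ℝ}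

theorem integrable_mul_neg_log_div_sum (hX : Measurable X) (hρ : ∀ c, Measurable (ρ c))
    (hε : 0 < ε) (hbound : ∀ᵐ x ∂(μ.map X), ∀ c, ε ≤ ρ c x ∧ ρ c x ≤ R) {N : ℕ} (i : Fin N)
    (cs : Fin N → Fin M) :
    Integrable (fun x => ρ (cs i) x * -log (ρ (cs i) x / ∑ j, ρ (cs j) x)) (μ.map X) := by
  have : IsProbabilityMeasure (μ.map X) := Measure.isProbabilityMeasure_map hX.aemeasurable
  refine Integrable.of_bound (by fun_prop) (N * R) ?_
  filter_upwards [hbound] with x hx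
  have hx0 : ∀ c, 0 < ρ c x := fun c => hε.trans_le (hx c).1
  rw [Real.norm_eq_abs]
  refine (abs_mul_neg_log_div_le (hx0 _) ?_).trans ?_
  · exact Finset.single_le_sum (fun j _ => (hx0 (cs j)).le) (Finset.mem_univ i)
  · simpa using Finset.sum_le_sum fun j (_ : j ∈ Finset.univ) => (hx (cs j)).2

theorem integral_Pmeas_neg_log_softmax_log (hX : Measurable X) (hC : Measurable C)
    (hρ : ∀ c, Measurable (ρ c))
    (hcond : ∀ c, condLaw μ X C c = (μ.map X).withDensity fun x => ENNReal.ofReal (ρ c x))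
    (hε : 0 < ε) (hbound : ∀ᵐ x ∂(μ.map X), ∀ c, ε ≤ ρ c x ∧ ρ c x ≤ R) {N : ℕ} (i : Fin N) :
    ∫ p, -log (exp (log (ρ (p.2 i) p.1)) / ∑ j, exp (log (ρ (p.2 j) p.1))) ∂(Pmeas μ X C N i) =
      ∫ x, ∑ cs : Fin N → Fin M, (∏ k, μ.real (C ⁻¹' {cs k})) *
        (ρ (cs i) x * -log (ρ (cs i) x / ∑ j, ρ (cs j) x)) ∂(μ.map X) := by
  have hpos : ∀ᵐ x ∂(μ.map X), ∀ c, 0 < ρ c x :=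
    hbound.mono fun x hx c => hε.trans_le (hx c).1
  have hsoftmax : ∀ᵐ x ∂(μ.map X), ∀ cs : Fin N → Fin M,
      -log (exp (log (ρ (cs i) x)) / ∑ j, exp (log (ρ (cs j) x))) =
        -log (ρ (cs i) x / ∑ j, ρ (cs j) x) :=
    hpos.mono fun x hx cs => by simp only [exp_log (hx _)]
  have hℓ : Measurable fun p : 𝓧 × (Fin N → Fin M) =>
      -log (exp (log (ρ (p.2 i) p.1)) / ∑ j, exp (log (ρ (p.2 j) p.1))) :=
    measurable_from_prod_countable_left fun cs => by dsimp only; fun_prop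
  have hint : ∀ cs : Fin N → Fin M, Integrable (fun x => ρ (cs i) x *
      -log (exp (log (ρ (cs i) x)) / ∑ j, exp (log (ρ (cs j) x)))) (μ.map X) := by
    intro cs
    refine (integrable_mul_neg_log_div_sum hX hρ hε hbound i cs).congr ?_
    filter_upwards [hsoftmax] with x hx
    rw [hx]
  rw [integral_Pmeas hC hρ (fun c => hpos.mono fun x hx => (hx c).le) hcond i hℓ hint]
  refine integral_congr_ae (hsoftmax.mono fun x hx => ?_)
  simp only [hx]

theorem abs_log_sub_integral_Pmeas_sub_le (hX : Measurable X) (hC : Measurable C)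
    (hρ : ∀ c, Measurable (ρ c))
    (hcond : ∀ c, condLaw μ X C c = (μ.map X).withDensity fun x => ENNReal.ofReal (ρ c x))
    (hε : 0 < ε) (hbound : ∀ᵐ x ∂(μ.map X), ∀ c, ε ≤ ρ c x ∧ ρ c x ≤ R)
    (hmass : ∀ᵐ x ∂(μ.map X), ∑ c, μ.real (C ⁻¹' {c}) * ρ c x = 1) {N : ℕ} (i : Fin N) :
    |log N - ∫ p, -log (exp (log (ρ (p.2 i) p.1)) / ∑ j, exp (log (ρ (p.2 j) p.1)))
        ∂(Pmeas μ X C N i) -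
      ∫ x, ∑ c, μ.real (C ⁻¹' {c}) * (ρ c x * log (ρ c x)) ∂(μ.map X)| ≤
      (1 + R / ε) * R / N := by
  have : IsProbabilityMeasure (μ.map X) := Measure.isProbabilityMeasure_map hX.aemeasurable
  have hπ : ∑ c, μ.real (C ⁻¹' {c}) = 1 := by
    rw [sum_measureReal_preimage_singleton _ fun c _ => hC (measurableSet_singleton c)]
    simp
  have hG : Integrable (fun x => ∑ cs : Fin N → Fin M, (∏ k, μ.real (C ⁻¹' {cs k})) *
      (ρ (cs i) x * -log (ρ (cs i) x / ∑ j, ρ (cs j) x))) (μ.map X) :=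
    integrable_finsetSum _ fun cs _ =>
      (integrable_mul_neg_log_div_sum hX hρ hε hbound i cs).const_mul _
  have hH : Integrable (fun x => ∑ c, μ.real (C ⁻¹' {c}) * (ρ c x * log (ρ c x))) (μ.map X) :=
    integrable_finsetSum _ fun c _ => (integrable_mul_log_of_ae_le (hρ c)
      (hbound.mono fun x hx => ⟨hε.le.trans (hx c).1, (hx c).2⟩)).const_mul _
  have hlog : log N = ∫ _x, log N ∂(μ.map X) := by simp
  rw [integral_Pmeas_neg_log_softmax_log hX hC hρ hcond hε hbound i, hlog,
    ← integral_sub (integrable_const _) hG,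
    ← integral_sub (by exact (integrable_const _).sub hG) hH]
  rw [← Real.norm_eq_abs]
  refine (norm_integral_le_of_norm_le_const (C := (1 + R / ε) * R / N) ?_).trans_eq ?_
  · filter_upwards [hbound, hmass] with x hx hxm
    exact abs_log_card_sub_sum_prod_mul_neg_log_sub_le (fun c => μ.real (C ⁻¹' {c}))
      (fun c => measureReal_nonneg) hπ hxm hε (fun c => (hx c).1) (fun c => (hx c).2) i
  · rw [probReal_univ, mul_one]

theorem tendsto_log_sub_contrastiveLoss (hX : Measurable X) (hC : Measurable C)
    (hρ : ∀ c, Measurable (ρ c))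
    (hcond : ∀ c, condLaw μ X C c = (μ.map X).withDensity fun x => ENNReal.ofReal (ρ c x))
    (hε : 0 < ε) (hbound : ∀ᵐ x ∂(μ.map X), ∀ c, ε ≤ ρ c x ∧ ρ c x ≤ R)
    (hmass : ∀ᵐ x ∂(μ.map X), ∑ c, μ.real (C ⁻¹' {c}) * ρ c x = 1) :
    Tendsto (fun N : ℕ => log N - contrastiveLoss μ X C N fun x c => log (ρ c x)) atTop
      (𝓝 (∫ x, ∑ c, μ.real (C ⁻¹' {c}) * (ρ c x * log (ρ c x)) ∂(μ.map X))) := by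
  rw [tendsto_iff_norm_sub_tendsto_zero]
  refine squeeze_zero' (Eventually.of_forall fun N => norm_nonneg _) ?_
    (tendsto_const_div_atTop_nhds_zero_nat ((1 + R / ε) * R))
  filter_upwards [eventually_gt_atTop 0] with N hN
  exact abs_sub_one_div_mul_sum_sub_le hN fun i =>
    abs_log_sub_integral_Pmeas_sub_le hX hC hρ hcond hε hbound hmass i

theorem ae_le_condProb_div_le_sum_inv (hpos : ∀ c, 0 < μ (C ⁻¹' {c})) {pc : Fin M → 𝓧 → ℝ}
    (hsum : ∀ᵐ x ∂(μ.map X), ∑ c, pc c x = 1) (hε : 0 < ε)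
    (hεpc : ∀ c, ∀ᵐ x ∂(μ.map X), ε ≤ pc c x) :
    ∀ᵐ x ∂(μ.map X), ∀ c, ε ≤ pc c x / μ.real (C ⁻¹' {c}) ∧
      pc c x / μ.real (C ⁻¹' {c}) ≤ ∑ c, (μ.real (C ⁻¹' {c}))⁻¹ := by
  have hπ : ∀ c, 0 < μ.real (C ⁻¹' {c}) := fun c =>
    ENNReal.toReal_pos (hpos c).ne' (measure_ne_top μ _)
  filter_upwards [ae_all_iff.2 hεpc, hsum] with x hx hx1 c
  have hpc1 : pc c x ≤ 1 :=
    hx1 ▸ Finset.single_le_sum (fun c _ => hε.le.trans (hx c)) (Finset.mem_univ c)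
  constructor
  · exact (hx c).trans (le_div_self (hε.le.trans (hx c)) (hπ c) measureReal_le_one)
  · calc pc c x / μ.real (C ⁻¹' {c}) ≤ 1 / μ.real (C ⁻¹' {c}) :=
          div_le_div_of_nonneg_right hpc1 (hπ c).le
      _ ≤ ∑ c, (μ.real (C ⁻¹' {c}))⁻¹ := by
          rw [one_div]
          exact Finset.single_le_sum (fun c _ => (inv_pos.2 (hπ c)).le) (Finset.mem_univ c)

end ContrastiveLoss

/-- third item of Proposition 2: with the optimal score
`s*(x,c) = log(p(c|x)/p(c))`, the shifted SoftNCE loss converges to the mutual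
information: `lim_{N→∞} (log N − L_N(s*)) = I(X;C)`. -/
theorem stmt_7 {Ω 𝓧 : Type*} [MeasurableSpace Ω] [MeasurableSpace 𝓧]
    {M : ℕ} (μ : Measure Ω) [IsProbabilityMeasure μ]
    (X : Ω → 𝓧) (C : Ω → Fin M) (hX : Measurable X) (hC : Measurable C)
    (hpos : ∀ c : Fin M, 0 < μ (C ⁻¹' {c}))
    -- `pc c` is a fixed measurable version of the conditional probability `P(C = c | X = x)`
    (pc : Fin M → 𝓧 → ℝ) (hpcmeas : ∀ c, Measurable (pc c))
    (hpcver : ∀ c, ∀ A : Set 𝓧, MeasurableSet A →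
      ∫ x in A, pc c x ∂(μ.map X) = (μ (X ⁻¹' A ∩ C ⁻¹' {c})).toReal)
    (hpceps : ∃ ε : ℝ, 0 < ε ∧ ∀ c, ∀ᵐ x ∂(μ.map X), ε ≤ pc c x) :
    Tendsto (fun N : ℕ =>
        ((Real.log N - contrastiveLoss μ X C N
            (fun x c => Real.log (pc c x / (μ (C ⁻¹' {c})).toReal)) : ℝ) : EReal))
      atTop (𝓝 (mutualInfo μ X C)) := by
  obtain ⟨ε, hε, hεpc⟩ := hpceps
  have hc : ∀ c, μ (C ⁻¹' {c}) ≠ 0 := fun c => (hpos c).ne'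
  have hπ : ∀ c, 0 < μ.real (C ⁻¹' {c}) := fun c => ENNReal.toReal_pos (hc c) (measure_ne_top μ _)
  have hsum := ae_sum_eq_one_of_forall_setIntegral_eq hX hC hc hpcver
  set ρ : Fin M → 𝓧 → ℝ := fun c x => pc c x / μ.real (C ⁻¹' {c})
  have hρ : ∀ c, Measurable (ρ c) := fun c => (hpcmeas c).div_const _
  have hcond : ∀ c, condLaw μ X C c = (μ.map X).withDensity fun x => ENNReal.ofReal (ρ c x) :=
    fun c => condLaw_eq_withDensity hX hC (hc c) ((hεpc c).mono fun x hx => hε.le.trans hx)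
      (hpcver c)
  have hbound := ae_le_condProb_div_le_sum_inv hpos hsum hε hεpc
  have hmass : ∀ᵐ x ∂(μ.map X), ∑ c, μ.real (C ⁻¹' {c}) * ρ c x = 1 :=
    hsum.mono fun x hx => by simpa only [ρ, mul_div_cancel₀ _ (hπ _).ne'] using hx
  rw [mutualInfo_eq_integral hX hC hρ (fun c => hbound.mono fun x hx => hε.le.trans (hx c).1) hcond
    fun c => integrable_mul_log_of_ae_le (hρ c)
      (hbound.mono fun x hx => ⟨hε.le.trans (hx c).1, (hx c).2⟩)]
  exact EReal.tendsto_coe.2 (tendsto_log_sub_contrastiveLoss hX hC hρ hcond hε hbound hmass)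
end
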